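/- arXiv:1602.06905 — 6 statements merged into one kernel-verified Lean document; each statement's English description precedes it below -/
import Mathlib

section
/- Let a,b be positive reals and λ a real with λ ≥ 2√(ab). Then there exists a positive sequence (x_n)_{n∈Z} satisfying a·x_{n-1} + b·x_{n+1} = λ·x_n for all n ∈ Z; if λ < 2√(ab) no nonzero nonnegative such sequence exists. -/
theorem stmt4 (a b lam : ℝ) (ha : 0 < a) (hb : 0 < b) :
    (2 * Real.sqrt (a * b) ≤ lam →
      ∃ x : ℤ → ℝ, (∀ n, 0 < x n) ∧
        ∀ n : ℤ, a * x (n - 1) + b * x (n + 1) = lam * x n) ∧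
    (lam < 2 * Real.sqrt (a * b) →
      ¬ ∃ x : ℤ → ℝ, (∀ n, 0 ≤ x n) ∧ (∃ n, x n ≠ 0) ∧
        ∀ n : ℤ, a * x (n - 1) + b * x (n + 1) = lam * x n) := by
  have habpos : 0 < a * b := mul_pos ha hb
  have hsq : 0 < Real.sqrt (a * b) := Real.sqrt_pos.mpr habpos
  have hsq2 : Real.sqrt (a * b) ^ 2 = a * b := Real.sq_sqrt habpos.le
  constructor
  · intro hl
    have hlpos : 0 < lam := lt_of_lt_of_le (by positivity) hl
    have hdisc : 0 ≤ lam ^ 2 - 4 * (a * b) := by nlinarith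
    set s := Real.sqrt (lam ^ 2 - 4 * (a * b)) with hs
    have hsnn : 0 ≤ s := Real.sqrt_nonneg _
    have hs2 : s ^ 2 = lam ^ 2 - 4 * (a * b) := Real.sq_sqrt hdisc
    set t := (lam + s) / (2 * b) with ht
    have htpos : 0 < t := by
      apply div_pos (by linarith) (by linarith)
    have key : b * t ^ 2 + a = lam * t := by
      rw [ht]
      field_simp
      nlinarith [hs2]
    refine ⟨fun n => t ^ n, fun n => zpow_pos htpos n, fun n => ?_⟩
    show a * t ^ (n - 1) + b * t ^ (n + 1) = lam * t ^ n
    have e1 : t ^ (n + 1) = t ^ (n - 1) * (t * t) := by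
      conv_lhs => rw [show n + 1 = (n - 1) + 1 + 1 by ring]
      rw [zpow_add_one₀ htpos.ne', zpow_add_one₀ htpos.ne', mul_assoc]
    have e2 : t ^ n = t ^ (n - 1) * t := by
      conv_lhs => rw [show n = (n - 1) + 1 by ring]
      rw [zpow_add_one₀ htpos.ne']
    rw [e1, e2]
    linear_combination t ^ (n - 1) * key
  · intro hl
    rintro ⟨x, hx0, ⟨m, hm⟩, hrec⟩
    have hxm : 0 < x m := (hx0 m).lt_of_ne (Ne.symm hm)
    -- first: lam > 0
    have hlpos : 0 < lam := by
      by_contra h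
      push_neg at h
      have h1 := hrec m
      have hlm : lam * x m ≤ 0 := mul_nonpos_of_nonpos_of_nonneg h (hx0 m)
      have hx1 : x (m + 1) = 0 := by
        have h2 : b * x (m + 1) ≤ 0 := by
          nlinarith [mul_nonneg ha.le (hx0 (m - 1))]
        nlinarith [hx0 (m + 1)]
      have h3 := hrec (m + 1)
      rw [add_sub_cancel_right, hx1, mul_zero] at h3
      nlinarith [mul_nonneg hb.le (hx0 (m + 1 + 1)), mul_pos ha hxm]
    -- positivity everywhere
    have hpos : ∀ n : ℤ, 0 < x n := by
      have fwd : ∀ k : ℕ, 0 < x (m + k) := by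
        intro k
        induction k with
        | zero => simpa using hxm
        | succ k ih =>
          have h := hrec (m + k + 1)
          rw [add_sub_cancel_right] at h
          have hpr : 0 < lam * x (m + k + 1) := by
            nlinarith [mul_pos ha ih, mul_nonneg hb.le (hx0 (m + k + 1 + 1))]
          have : 0 < x (m + k + 1) := by
            by_contra hc
            push_neg at hc
            nlinarith [mul_nonpos_of_nonneg_of_nonpos hlpos.le hc]
          have e : m + ((k : ℤ) + 1) = m + k + 1 := by ring
          push_cast
          rw [e]
          exact this
      have bwd : ∀ k : ℕ, 0 < x (m - k) := by
        intro k
        induction k with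
        | zero => simpa using hxm
        | succ k ih =>
          have h := hrec (m - k - 1)
          rw [show m - (k : ℤ) - 1 + 1 = m - k by ring] at h
          have hpr : 0 < lam * x (m - k - 1) := by
            nlinarith [mul_pos hb ih, mul_nonneg ha.le (hx0 (m - k - 1 - 1))]
          have : 0 < x (m - k - 1) := by
            by_contra hc
            push_neg at hc
            nlinarith [mul_nonpos_of_nonneg_of_nonpos hlpos.le hc]
          have e : m - ((k : ℤ) + 1) = m - k - 1 := by ring
          push_cast
          rw [e]
          exact this
      intro n
      rcases le_total m n with h | h
      · have := fwd (n - m).toNat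
        rwa [Int.toNat_of_nonneg (by omega), show m + (n - m) = n by ring] at this
      · have := bwd (m - n).toNat
        rwa [Int.toNat_of_nonneg (by omega), show m - (m - n) = n by ring] at this
    have hl2 : lam ^ 2 < 4 * (a * b) := by nlinarith
    -- log-concavity
    have key4 : ∀ n : ℤ, 4 * (a * b) * (x (n - 1) * x (n + 1)) ≤ lam ^ 2 * x n ^ 2 := by
      intro n
      have hsqr : (a * x (n - 1) + b * x (n + 1)) ^ 2 = (lam * x n) ^ 2 := by rw [hrec n]
      nlinarith [hsqr, sq_nonneg (a * x (n - 1) - b * x (n + 1))]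
    have bnd : ∀ n : ℤ, b * x (n + 1) ≤ lam * x n := by
      intro n
      nlinarith [hrec n, mul_pos ha (hpos (n - 1))]
    -- iterated inequality
    have P : ∀ k : ℕ, x 1 * x (-(k : ℤ)) * (4 * (a * b)) ^ k ≤
        (lam ^ 2) ^ k * x (1 - (k : ℤ)) * x 0 := by
      intro k
      induction k with
      | zero => simp
      | succ k ih =>
        have h4 := key4 (-(k : ℤ))
        rw [show -(k : ℤ) + 1 = 1 - k by ring] at h4
        have hk : 0 < x (-(k : ℤ)) := hpos _
        have A := mul_le_mul_of_nonneg_left ih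
          (mul_nonneg (by positivity : (0:ℝ) ≤ 4 * (a * b)) (hpos (-(k : ℤ) - 1)).le)
        have B := mul_le_mul_of_nonneg_left h4
          (mul_nonneg (by positivity : (0:ℝ) ≤ (lam ^ 2) ^ k) (hpos 0).le)
        have step : (x 1 * x (-(k : ℤ) - 1) * ((4 * (a * b)) ^ k * (4 * (a * b)))) * x (-(k : ℤ)) ≤
            (((lam ^ 2) ^ k * lam ^ 2) * x (-(k : ℤ)) * x 0) * x (-(k : ℤ)) := by
          nlinarith [A, B]
        have hfin := le_of_mul_le_mul_right step hk
        push_cast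
        rw [show -((k : ℤ) + 1) = -(k : ℤ) - 1 by ring, show 1 - ((k : ℤ) + 1) = -(k : ℤ) by ring,
          pow_succ, pow_succ]
        exact hfin
    -- contradiction
    have hd : 1 < 4 * (a * b) / lam ^ 2 := (one_lt_div (pow_pos hlpos 2)).mpr hl2
    obtain ⟨K, hK⟩ := pow_unbounded_of_one_lt ((lam * x 0) / (b * x 1)) hd
    rw [div_pow, div_lt_div_iff₀ (mul_pos hb (hpos 1)) (pow_pos (pow_pos hlpos 2) K)] at hK
    have PK := P K
    have BK := bnd (-(K : ℤ))
    rw [show -(K : ℤ) + 1 = 1 - (K : ℤ) by ring] at BK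
    have M1 := mul_le_mul_of_nonneg_left PK hb.le
    have M2 := mul_le_mul_of_nonneg_left BK
      (mul_nonneg (by positivity : (0:ℝ) ≤ (lam ^ 2) ^ K) (hpos 0).le)
    have M3 := mul_lt_mul_of_pos_right hK (hpos (-(K : ℤ)))
    nlinarith [M1, M2, M3]
end

section
/- Let a,b be positive reals and λ ≥ 2√(ab). No positive solution (x_n)_{n∈Z} of the difference equation a·x_{n-1} + b·x_{n+1} = λ·x_n (n ∈ Z) is summable, i.e. ∑_{n∈Z} x_n = ∞ for every positive solution. -/
/-!
Summing the recurrence over `ℤ` shows `λ = a + b`. The recurrence then says exactly that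
`e n = b x (n + 1) - a x n` does not depend on `n`; as `x n → 0`, `e = 0`. Summing
`b x (n + 1) = a x n` over `ℤ` gives `a = b`, so `x` is a positive constant, which does not tend to `0`.
-/

open Filter Function Topology

section Shift

variable {G M : Type*} [AddGroup G] [AddCommMonoid M] [TopologicalSpace M]

theorem tsum_comp_add_right (f : G → M) (k : G) : ∑' n, f (n + k) = ∑' n, f n :=
  (Equiv.addRight k).tsum_eq f

theorem tsum_comp_sub_right (f : G → M) (k : G) : ∑' n, f (n - k) = ∑' n, f n :=
  (Equiv.subRight k).tsum_eq f

theorem Summable.comp_add_right {f : G → M} (hf : Summable f) (k : G) :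
    Summable fun n => f (n + k) :=
  (Equiv.addRight k).summable_iff.2 hf

theorem Summable.comp_sub_right {f : G → M} (hf : Summable f) (k : G) :
    Summable fun n => f (n - k) :=
  (Equiv.subRight k).summable_iff.2 hf

end Shift

section Recurrence

variable {R : Type*}

theorem Summable.add_mul_tsum_eq_of_recurrence [Ring R] [TopologicalSpace R]
    [IsTopologicalRing R] [T2Space R] {a b lam : R} {x : ℤ → R} (hx : Summable x)
    (hrec : ∀ n, a * x (n - 1) + b * x (n + 1) = lam * x n) :
    (a + b) * ∑' n, x n = lam * ∑' n, x n := by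
  have hx_sub := hx.comp_sub_right 1
  have hx_add := hx.comp_add_right 1
  calc (a + b) * ∑' n, x n = a * ∑' n, x (n - 1) + b * ∑' n, x (n + 1) := by
        rw [tsum_comp_sub_right, tsum_comp_add_right, add_mul]
    _ = ∑' n, (a * x (n - 1) + b * x (n + 1)) := by
        rw [(hx_sub.mul_left a).tsum_add (hx_add.mul_left b), hx_sub.tsum_mul_left,
          hx_add.tsum_mul_left]
    _ = lam * ∑' n, x n := by rw [tsum_congr hrec, hx.tsum_mul_left]

theorem periodic_sub_of_recurrence [CommRing R] {a b : R} {x : ℤ → R}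
    (hrec : ∀ n, a * x (n - 1) + b * x (n + 1) = (a + b) * x n) :
    Periodic (fun n => b * x (n + 1) - a * x n) 1 := by
  intro n
  have h := hrec (n + 1)
  rw [add_sub_cancel_right, add_assoc, one_add_one_eq_two] at h
  simp only [add_assoc, one_add_one_eq_two]
  linear_combination h

end Recurrence

theorem Function.Periodic.eq_of_tendsto_atTop {α : Type*} [TopologicalSpace α] [T2Space α]
    {f : ℤ → α} (hf : Periodic f 1) {l : α} (h : Tendsto f atTop (𝓝 l)) (n : ℤ) : f n = l := by
  have hconst : f = fun _ => f 0 := funext fun m => by simpa using hf.int_mul_eq m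
  rw [hconst] at h
  rw [congrFun hconst n, tendsto_const_nhds_iff.1 h]

theorem stmt5_general (a b lam : ℝ) (hb : 0 < b) (x : ℤ → ℝ) (hx : ∀ n, 0 < x n)
    (hrec : ∀ n : ℤ, a * x (n - 1) + b * x (n + 1) = lam * x n) :
    ¬ Summable x := by
  intro hsum
  have hS : 0 < ∑' n, x n := hsum.tsum_pos (fun n => (hx n).le) 0 (hx 0)
  have hx_lim : Tendsto x atTop (𝓝 0) :=
    hsum.tendsto_cofinite_zero.mono_left (Int.cofinite_eq ▸ le_sup_right)
  obtain rfl : lam = a + b :=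
    (mul_right_cancel₀ hS.ne' (hsum.add_mul_tsum_eq_of_recurrence hrec)).symm
  have hfirst (n : ℤ) : b * x (n + 1) = a * x n := by
    refine sub_eq_zero.1 ((periodic_sub_of_recurrence hrec).eq_of_tendsto_atTop ?_ n)
    simpa using ((hx_lim.comp (tendsto_atTop_add_const_right _ 1 tendsto_id)).const_mul b).sub
      (hx_lim.const_mul a)
  have hab : b = a := by
    refine mul_right_cancel₀ hS.ne' ?_
    calc b * ∑' n, x n = ∑' n, b * x (n + 1) := by
          rw [tsum_mul_left, tsum_comp_add_right]
      _ = a * ∑' n, x n := by rw [tsum_congr hfirst, tsum_mul_left]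
  have hper : Periodic x 1 := fun n => mul_left_cancel₀ hb.ne' (hab ▸ hfirst n)
  exact (hx 0).ne' (hper.eq_of_tendsto_atTop hx_lim 0)

theorem stmt5 (a b lam : ℝ) (ha : 0 < a) (hb : 0 < b)
    (hlam : 2 * Real.sqrt (a * b) ≤ lam) (x : ℤ → ℝ) (hx : ∀ n, 0 < x n)
    (hrec : ∀ n : ℤ, a * x (n - 1) + b * x (n + 1) = lam * x n) :
    ¬ Summable x :=
  stmt5_general a b lam hb x hx hrec
end

section
/- Let M be a nonnegative irreducible aperiodic row-finite matrix with finite Perron value λ_M, and suppose lim_n m_{11}(n)/λ_M^n = μ exists with 0 ≤ μ ≤ 1. Then for N = M + E, lim_n n_{11}(n)/(λ_M+1)^n = μ, where n_{11}(n) = ∑_{k=0}^n binomial(n,k) m_{11}(k). -/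
/-!
Write `a k = m₁₁(k) / λ^k`. Since `(λ + 1)^n = ∑ₖ C(n,k) λ^k`, the quotient `n₁₁(n) / (λ + 1)^n`
is the average of the `a k` against the binomial weights `C(n,k) λ^k / (λ + 1)^n`. These weights
are nonnegative, sum to one, and each of them tends to zero as `n → ∞` because `C(n,k) ≤ n^k` is
polynomial in `n`; a weighted average of this kind of a convergent sequence converges to the same
limit (the positive case of the Silverman–Toeplitz theorem).
-/

open scoped BigOperators

/-- Powers of a nonnegative-integer matrix indexed by a countable set. -/
noncomputable def matPowN {P : Type*} [DecidableEq P] (M : P → P → ℕ) : ℕ → P → P → ℕ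
  | 0 => fun i j => if i = j then 1 else 0
  | n + 1 => fun i j => ∑ᶠ k, M i k * matPowN M n k j

open Filter Topology Finset

section RegularWeights

variable {w : ℕ → ℕ → ℝ}

theorem tendsto_sum_range_mul_zero_of_tendsto_zero (hw_nonneg : ∀ n k, 0 ≤ w n k)
    (hw_sum : ∀ n, ∑ k ∈ range (n + 1), w n k ≤ 1)
    (hw_col : ∀ k, Tendsto (fun n => w n k) atTop (𝓝 0)) {b : ℕ → ℝ} (hb_nonneg : ∀ k, 0 ≤ b k)
    (hb : Tendsto b atTop (𝓝 0)) :
    Tendsto (fun n => ∑ k ∈ range (n + 1), w n k * b k) atTop (𝓝 0) := by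
  rw [Metric.tendsto_atTop] at hb ⊢
  intro ε hε
  obtain ⟨K, hK⟩ := hb (ε / 2) (half_pos hε)
  have hhead : Tendsto (fun n => ∑ k ∈ range K, w n k * b k) atTop (𝓝 0) := by
    simpa using tendsto_finsetSum (range K) fun k _ => (hw_col k).mul_const (b k)
  obtain ⟨N, hN⟩ := Metric.tendsto_atTop.1 hhead (ε / 2) (half_pos hε)
  refine ⟨max K N, fun n hn => ?_⟩
  have hhead_lt : ∑ k ∈ range K, w n k * b k < ε / 2 := by
    have := hN n (le_of_max_le_right hn)
    rw [Real.dist_eq, sub_zero] at this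
    exact (le_abs_self _).trans_lt this
  have htail_le : ∑ k ∈ Ico K (n + 1), w n k * b k ≤ ε / 2 :=
    calc ∑ k ∈ Ico K (n + 1), w n k * b k
        ≤ ∑ k ∈ Ico K (n + 1), w n k * (ε / 2) := by
          refine sum_le_sum fun k hk => mul_le_mul_of_nonneg_left ?_ (hw_nonneg n k)
          simpa [Real.dist_eq, abs_of_nonneg (hb_nonneg k)] using (hK k (mem_Ico.1 hk).1).le
      _ ≤ ∑ k ∈ range (n + 1), w n k * (ε / 2) :=
          sum_le_sum_of_subset_of_nonneg (fun k hk => mem_range.2 (mem_Ico.1 hk).2)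
            fun k _ _ => mul_nonneg (hw_nonneg n k) (half_pos hε).le
      _ ≤ ε / 2 := by
          rw [← sum_mul]
          exact mul_le_of_le_one_left (half_pos hε).le (hw_sum n)
  have hsum_nonneg : 0 ≤ ∑ k ∈ range (n + 1), w n k * b k :=
    sum_nonneg fun k _ => mul_nonneg (hw_nonneg n k) (hb_nonneg k)
  rw [Real.dist_eq, sub_zero, abs_of_nonneg hsum_nonneg,
    ← sum_range_add_sum_Ico _ (by omega : K ≤ n + 1)]
  linarith

theorem tendsto_sum_range_smul_of_tendsto {E : Type*} [NormedAddCommGroup E] [NormedSpace ℝ E]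
    (hw_nonneg : ∀ n k, 0 ≤ w n k) (hw_sum : ∀ n, ∑ k ∈ range (n + 1), w n k = 1)
    (hw_col : ∀ k, Tendsto (fun n => w n k) atTop (𝓝 0)) {a : ℕ → E} {l : E}
    (ha : Tendsto a atTop (𝓝 l)) :
    Tendsto (fun n => ∑ k ∈ range (n + 1), w n k • a k) atTop (𝓝 l) := by
  have hdiff : ∀ n, ∑ k ∈ range (n + 1), w n k • a k - l
      = ∑ k ∈ range (n + 1), w n k • (a k - l) := by
    intro n
    simp only [smul_sub, sum_sub_distrib, ← sum_smul, hw_sum, one_smul]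
  rw [tendsto_iff_norm_sub_tendsto_zero]
  refine squeeze_zero (fun n => norm_nonneg _) (fun n => ?_)
    (tendsto_sum_range_mul_zero_of_tendsto_zero hw_nonneg (fun n => (hw_sum n).le) hw_col
      (fun k => norm_nonneg (a k - l)) (tendsto_iff_norm_sub_tendsto_zero.1 ha))
  rw [hdiff]
  refine (norm_sum_le _ _).trans_eq (sum_congr rfl fun k _ => ?_)
  rw [norm_smul, Real.norm_of_nonneg (hw_nonneg n k)]

end RegularWeights

section BinomialWeights

variable {r : ℝ}

theorem sum_range_choose_mul_pow_div_add_one_pow (hr : r + 1 ≠ 0) (n : ℕ) :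
    ∑ k ∈ range (n + 1), (n.choose k : ℝ) * r ^ k / (r + 1) ^ n = 1 := by
  rw [← sum_div, div_eq_one_iff_eq (pow_ne_zero _ hr), add_pow]
  exact sum_congr rfl fun k _ => by ring

theorem tendsto_choose_mul_pow_div_add_one_pow_zero (hr : 0 < r) (k : ℕ) :
    Tendsto (fun n : ℕ => (n.choose k : ℝ) * r ^ k / (r + 1) ^ n) atTop (𝓝 0) := by
  have hdom : Tendsto (fun n : ℕ => (n : ℝ) ^ k / (r + 1) ^ n * r ^ k) atTop (𝓝 0) := by
    simpa using (tendsto_pow_const_div_const_pow_of_one_lt k (by linarith : 1 < r + 1)).mul_const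
      (r ^ k)
  refine squeeze_zero (fun n => by positivity) (fun n => ?_) hdom
  rw [div_mul_eq_mul_div]
  have : (n.choose k : ℝ) ≤ (n : ℝ) ^ k := by exact_mod_cast Nat.choose_le_pow n k
  gcongr

end BinomialWeights

theorem stmt8_general {P : Type*} [DecidableEq P]
    (M : P → P → ℕ)
    (lamM : ℝ) (hlamM : 0 < lamM)
    (one : P) (μ : ℝ)
    (hμ : Filter.Tendsto (fun n : ℕ => ((matPowN M n one one : ℕ) : ℝ) / lamM ^ n)
      Filter.atTop (nhds μ)) :
    Filter.Tendsto
      (fun n : ℕ =>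
        (∑ k ∈ Finset.range (n + 1), (n.choose k : ℝ) * ((matPowN M k one one : ℕ) : ℝ)) /
          (lamM + 1) ^ n)
      Filter.atTop (nhds μ) := by
  have hbinomial := tendsto_sum_range_smul_of_tendsto (fun n k => by positivity)
    (sum_range_choose_mul_pow_div_add_one_pow (by positivity))
    (tendsto_choose_mul_pow_div_add_one_pow_zero hlamM) hμ
  refine hbinomial.congr fun n => ?_
  rw [sum_div]
  refine sum_congr rfl fun k _ => ?_
  rw [smul_eq_mul]
  field_simp

theorem stmt8 {P : Type*} [DecidableEq P] [Countable P]
    (M : P → P → ℕ)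
    (hrow : ∀ i, {j | M i j ≠ 0}.Finite)
    (hirr : ∀ i j : P, ∃ n, 0 < matPowN M n i j)
    (haper : ∀ i : P, ∀ d : ℕ, (∀ n, 1 ≤ n → 0 < matPowN M n i i → d ∣ n) → d = 1)
    (lamM : ℝ) (hlamM : 0 < lamM)
    (hPerron : ∀ i : P,
      IsLUB {x : ℝ | ∃ n : ℕ, 1 ≤ n ∧ x = ((matPowN M n i i : ℕ) : ℝ) ^ ((1 : ℝ) / (n : ℝ))} lamM)
    (one : P) (μ : ℝ) (hμ0 : 0 ≤ μ) (hμ1 : μ ≤ 1)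
    (hμ : Filter.Tendsto (fun n : ℕ => ((matPowN M n one one : ℕ) : ℝ) / lamM ^ n)
      Filter.atTop (nhds μ)) :
    Filter.Tendsto
      (fun n : ℕ =>
        (∑ k ∈ Finset.range (n + 1), (n.choose k : ℝ) * ((matPowN M k one one : ℕ) : ℝ)) /
          (lamM + 1) ^ n)
      Filter.atTop (nhds μ) :=
  stmt8_general M lamM hlamM one μ hμ
end

section
/- Let T : [0,1] → [0,1] be continuous and λ-Lipschitz for some λ ≥ 1, and suppose T has an n-horseshoe, i.e. there exist m pairwise non-overlapping closed subintervals J_1,…,J_m of [0,1] with T^n(J_i) ⊇ J_j for all i,j. Then m ≤ λ^n. -/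
open MeasureTheory Set

theorem stmt9 (T : ℝ → ℝ) (lam : ℝ) (hlam : 1 ≤ lam)
    (hT : ContinuousOn T (Set.Icc 0 1))
    (hmap : Set.MapsTo T (Set.Icc 0 1) (Set.Icc 0 1))
    (hlip : LipschitzOnWith (Real.toNNReal lam) T (Set.Icc 0 1))
    (n m : ℕ) (a b : Fin m → ℝ)
    (hab : ∀ i, a i < b i)
    (hsub : ∀ i, Set.Icc (a i) (b i) ⊆ Set.Icc 0 1)
    (hdisj : ∀ i j, i ≠ j → b i ≤ a j ∨ b j ≤ a i)
    (hhorse : ∀ i j, Set.Icc (a j) (b j) ⊆ T^[n] '' Set.Icc (a i) (b i)) :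
    (m : ℝ) ≤ lam ^ n := by
  have hlam0 : (0:ℝ) ≤ lam := le_trans zero_le_one hlam
  rcases Nat.eq_zero_or_pos m with hm | hm
  · subst hm; simp; positivity
  · have hiter : ∀ k, LipschitzOnWith (Real.toNNReal lam ^ k) (T^[k]) (Icc (0:ℝ) 1) := by
      intro k
      induction k with
      | zero => simpa using (LipschitzWith.id.lipschitzOnWith (s := Icc (0:ℝ) 1))
      | succ k ih =>
        rw [Function.iterate_succ, pow_succ]
        exact ih.comp hlip hmap
    set S : ℝ := ∑ j : Fin m, (b j - a j) with hS
    have hSpos : 0 < S :=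
      Finset.sum_pos (fun j _ => sub_pos.2 (hab j)) ⟨⟨0, hm⟩, Finset.mem_univ _⟩
    have hvol : volume (⋃ j, Icc (a j) (b j)) = ENNReal.ofReal S := by
      rw [measure_iUnion₀ ?_ (fun j => measurableSet_Icc.nullMeasurableSet), tsum_fintype]
      · rw [hS, ENNReal.ofReal_sum_of_nonneg (fun j _ => (sub_pos.2 (hab j)).le)]
        simp [Real.volume_Icc]
      · intro i j hij
        rcases hdisj i j hij with h | h
        · refine measure_mono_null (fun x hx => ?_) (by simp [Real.volume_Icc, sub_nonpos.2 h] :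
            volume (Icc (a j) (b i)) = 0)
          exact ⟨hx.2.1, hx.1.2⟩
        · refine measure_mono_null (fun x hx => ?_) (by simp [Real.volume_Icc, sub_nonpos.2 h] :
            volume (Icc (a i) (b j)) = 0)
          exact ⟨hx.1.1, hx.2.2⟩
    have key : ∀ i, S ≤ lam ^ n * (b i - a i) := by
      intro i
      have hsubU : (⋃ j, Icc (a j) (b j)) ⊆ T^[n] '' Icc (a i) (b i) :=
        iUnion_subset fun j => hhorse i j
      have h1 : ENNReal.ofReal S ≤ EMetric.diam (T^[n] '' Icc (a i) (b i)) := by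
        rw [← hvol]
        exact le_trans (measure_mono hsubU) (Real.volume_le_diam _)
      have hL := (hiter n).mono (hsub i)
      have hc : ((Real.toNNReal lam ^ n : NNReal) : ENNReal) = ENNReal.ofReal (lam ^ n) := by
        rw [← Real.toNNReal_pow hlam0]; rfl
      have h2 : EMetric.diam (T^[n] '' Icc (a i) (b i)) ≤
          ENNReal.ofReal (lam ^ n * (b i - a i)) := by
        apply EMetric.diam_le
        rintro _ ⟨x, hx, rfl⟩ _ ⟨y, hy, rfl⟩
        calc edist (T^[n] x) (T^[n] y) ≤ (Real.toNNReal lam ^ n : NNReal) * edist x y :=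
              hL hx hy
          _ ≤ ENNReal.ofReal (lam ^ n) * ENNReal.ofReal (b i - a i) := by
              rw [hc]
              gcongr
              calc edist x y ≤ EMetric.diam (Icc (a i) (b i)) :=
                    EMetric.edist_le_diam_of_mem hx hy
                _ = ENNReal.ofReal (b i - a i) := Real.ediam_Icc _ _
          _ = ENNReal.ofReal (lam ^ n * (b i - a i)) :=
              (ENNReal.ofReal_mul (pow_nonneg hlam0 n)).symm
      have := le_trans h1 h2
      rwa [ENNReal.ofReal_le_ofReal_iff
        (mul_nonneg (pow_nonneg hlam0 n) (sub_pos.2 (hab i)).le)] at this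
    have hsum : (m : ℝ) * S ≤ lam ^ n * S := by
      calc (m : ℝ) * S = ∑ _i : Fin m, S := by
            simp [mul_comm, Finset.sum_const]
        _ ≤ ∑ i : Fin m, lam ^ n * (b i - a i) := Finset.sum_le_sum fun i _ => key i
        _ = lam ^ n * S := by rw [hS, Finset.mul_sum]
    exact le_of_mul_le_mul_right hsum hSpos
end

section
/- Let B = {1,2,3,4} ∪ ⋃_{k≥2} {3^k+1, 3^k+2}, and define a_n = 1 if n ∈ B and a_n = 3 otherwise. With f(1)=1 and f(n)=a_1⋯a_{n-1} for n ≥ 2, one has lim_n f(n)^{1/n} = 3 and ∑_{n≥1} f(n) 3^{-n} < 1. -/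
open Filter Finset Topology

/-!
Off `B` every factor of `f` is `3`, so `f (n + 1) = 3 ^ (n - #(B ∩ [1, n]))`. As `B` has only
`O(log n)` elements below `n`, this gives `f n ^ (1 / n) → 3`. Conversely `B` has at least `2k + 2`
elements below `3 ^ k + 3`, whence `f n / 3 ^ n ≤ 3 / n ^ 2`; this telescopes to at most `1/3` from
`n = 10` on, while `{1, 2, 3, 4} ⊆ B` bounds the first nine terms by `125/243`.
-/

lemma prod_eq_pow_card_filter_notMem {ι M : Type*} [CommMonoid M] {B : Set ι}
    [DecidablePred (· ∈ B)] {a : ι → M} {b : M} (ha1 : ∀ i ∈ B, a i = 1)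
    (hab : ∀ i ∉ B, a i = b) (s : Finset ι) : ∏ i ∈ s, a i = b ^ #{i ∈ s | i ∉ B} := by
  rw [← prod_filter_mul_prod_filter_not s (· ∈ B),
    prod_eq_one fun i hi => ha1 i (mem_filter.1 hi).2, one_mul,
    prod_eq_pow_card fun i hi => hab i (mem_filter.1 hi).2]

lemma card_filter_notMem_Icc_add_count {B : Set ℕ} [DecidablePred (· ∈ B)] (h0 : 0 ∉ B)
    (n : ℕ) : #{i ∈ Icc 1 (n - 1) | i ∉ B} + Nat.count (· ∈ B) n = n - 1 := by
  have hcount : Nat.count (· ∈ B) n = #{i ∈ Icc 1 (n - 1) | i ∈ B} := by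
    rw [Nat.count_eq_card_filter_range]
    congr 1
    ext i
    simp only [mem_filter, mem_range, mem_Icc]
    constructor
    · rintro ⟨hi, hiB⟩
      exact ⟨⟨Nat.pos_of_ne_zero (by rintro rfl; exact h0 hiB), by omega⟩, hiB⟩
    · rintro ⟨hi, hiB⟩
      exact ⟨by omega, hiB⟩
  rw [hcount, add_comm, card_filter_add_card_filter_not, Nat.card_Icc, Nat.add_sub_cancel]

lemma tendsto_pow_rpow_one_div {b : ℝ} (hb : 0 < b) {e : ℕ → ℕ}
    (he : Tendsto (fun n => (e n : ℝ) / n) atTop (𝓝 1)) :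
    Tendsto (fun n : ℕ => (b ^ e n) ^ ((1 : ℝ) / n)) atTop (𝓝 b) := by
  have h := (tendsto_const_nhds (x := b)).rpow he (Or.inl hb.ne')
  rw [Real.rpow_one] at h
  refine h.congr fun n => ?_
  rw [← Real.rpow_natCast, ← Real.rpow_mul hb.le, mul_one_div]

lemma tendsto_natLog_div_atTop (b : ℕ) :
    Tendsto (fun n : ℕ => (Nat.log b n : ℝ) / n) atTop (𝓝 0) := by
  have hlog : Tendsto (fun n : ℕ => Real.log n / n / Real.log b) atTop (𝓝 0) := by
    simpa using (Real.isLittleO_log_id_atTop.tendsto_div_nhds_zero.comp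
      tendsto_natCast_atTop_atTop).div_const (Real.log b)
  refine tendsto_of_tendsto_of_tendsto_of_le_of_le tendsto_const_nhds hlog
    (fun n => by positivity) fun n => ?_
  calc (Nat.log b n : ℝ) / n ≤ Real.logb b n / n := by
        gcongr
        exact Real.natLog_le_logb n b
    _ = Real.log n / n / Real.log b := by rw [Real.logb, div_right_comm]

lemma summable_and_tsum_le_of_le_telescoping {g : ℕ → ℝ} (hg : ∀ n, 0 ≤ g n) {C : ℝ}
    (hC : 0 ≤ C) {K : ℕ} (h : ∀ n, g n ≤ C * (1 / (n + K) - 1 / (n + 1 + K))) :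
    Summable g ∧ ∑' n, g n ≤ C / K := by
  have hpartial : ∀ N, ∑ n ∈ range N, g n ≤ C / K := fun N => by
    calc ∑ n ∈ range N, g n ≤ ∑ n ∈ range N, C * (1 / (n + K) - 1 / (n + 1 + K)) :=
          sum_le_sum fun n _ => h n
      _ = C * (1 / K - 1 / (N + K)) := by
          have htele := sum_range_sub' (fun n : ℕ => 1 / ((n : ℝ) + K)) N
          push_cast at htele
          rw [← mul_sum, htele, zero_add]
      _ ≤ C / K := by
          rw [mul_sub, mul_one_div]
          have : 0 ≤ C * (1 / (N + K)) := by positivity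
          linarith
  have hsum := summable_of_sum_range_le hg hpartial
  exact ⟨hsum, hsum.tsum_le_of_sum_range_le hpartial⟩

lemma pow_div_pow_succ_of_add_eq {K : Type*} [Field K] {b : K} (hb : b ≠ 0) {m c n : ℕ}
    (h : m + c = n) : b ^ m / b ^ (n + 1) = b⁻¹ ^ (c + 1) := by
  subst h
  rw [pow_succ, pow_add, inv_pow, pow_succ]
  field_simp

def deletionSet : Set ℕ := {1, 2, 3, 4} ∪ {m | ∃ k, 2 ≤ k ∧ (m = 3 ^ k + 1 ∨ m = 3 ^ k + 2)}

lemma zero_notMem_deletionSet : 0 ∉ deletionSet := by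
  simp [deletionSet]

section count

variable [DecidablePred (· ∈ deletionSet)]

lemma min_four_le_count_deletionSet (n : ℕ) :
    min n 4 ≤ Nat.count (· ∈ deletionSet) (n + 1) := by
  have hsub : Icc 1 (min n 4) ⊆ {i ∈ range (n + 1) | i ∈ deletionSet} := fun i hi => by
    simp only [mem_Icc] at hi
    refine mem_filter.2 ⟨mem_range.2 (by omega), Or.inl ?_⟩
    simp only [Set.mem_insert_iff, Set.mem_singleton_iff]
    omega
  simpa [Nat.count_eq_card_filter_range] using card_le_card hsub

lemma two_mul_add_two_le_count_deletionSet {k : ℕ} (hk : 1 ≤ k) :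
    2 * k + 2 ≤ Nat.count (· ∈ deletionSet) (3 ^ k + 3) := by
  induction k, hk using Nat.le_induction with
  | base => simpa using min_four_le_count_deletionSet 5
  | succ k hk ih =>
    have hmem : ∀ j ∈ ({1, 2} : Finset ℕ), 3 ^ (k + 1) + j ∈ deletionSet := by
      intro j hj
      refine Or.inr ⟨k + 1, by omega, ?_⟩
      simp only [mem_insert, mem_singleton] at hj
      omega
    have hmono : Nat.count (· ∈ deletionSet) (3 ^ k + 3) ≤
        Nat.count (· ∈ deletionSet) (3 ^ (k + 1) + 1) :=
      Nat.count_monotone _ (by have := Nat.one_le_pow k 3 (by norm_num); rw [pow_succ]; omega)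
    rw [show 3 ^ (k + 1) + 3 = 3 ^ (k + 1) + 2 + 1 by rfl,
      Nat.count_succ_eq_succ_count (p := (· ∈ deletionSet)) (hmem 2 (by simp)),
      Nat.count_succ_eq_succ_count (p := (· ∈ deletionSet)) (hmem 1 (by simp))]
    omega

lemma sq_le_three_pow_count_deletionSet {n : ℕ} (hn : 6 ≤ n) :
    n ^ 2 ≤ 3 ^ (Nat.count (· ∈ deletionSet) n + 2) := by
  set k := Nat.log 3 (n - 3)
  have hk : 1 ≤ k := Nat.le_log_of_pow_le (by norm_num) (by omega)
  have hlo : 3 ^ k ≤ n - 3 := Nat.pow_log_le_self 3 (by omega)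
  have hhi : n - 3 < 3 ^ (k + 1) := Nat.lt_pow_succ_log_self (by norm_num) _
  have hn_le : n ≤ 3 ^ (k + 2) := by rw [pow_succ 3 (k + 1)]; omega
  have hcount : 2 * k + 2 ≤ Nat.count (· ∈ deletionSet) n :=
    (two_mul_add_two_le_count_deletionSet hk).trans (Nat.count_monotone _ (by omega))
  calc n ^ 2 ≤ (3 ^ (k + 2)) ^ 2 := Nat.pow_le_pow_left hn_le 2
    _ = 3 ^ (2 * k + 2 + 2) := by ring
    _ ≤ 3 ^ (Nat.count (· ∈ deletionSet) n + 2) := Nat.pow_le_pow_right (by norm_num) (by omega)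

lemma count_deletionSet_le (n : ℕ) :
    Nat.count (· ∈ deletionSet) n ≤ 2 * Nat.log 3 n + 7 := by
  set L := Nat.log 3 n
  have hsub : {i ∈ range n | i ∈ deletionSet} ⊆
      range 5 ∪ ((range (L + 1)).image (3 ^ · + 1) ∪ (range (L + 1)).image (3 ^ · + 2)) := by
    intro i hi
    simp only [mem_filter, mem_range] at hi
    obtain ⟨hin, hmem⟩ := hi
    rcases hmem with hsmall | ⟨j, -, hj⟩
    · simp only [Set.mem_insert_iff, Set.mem_singleton_iff] at hsmall
      simp only [mem_union, mem_range]
      omega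
    · have hjL : j < L + 1 := Nat.lt_succ_of_le (Nat.le_log_of_pow_le (by norm_num) (by omega))
      simp only [mem_union, mem_image, mem_range]
      exact Or.inr (hj.imp (fun h => ⟨j, hjL, h.symm⟩) fun h => ⟨j, hjL, h.symm⟩)
  calc Nat.count (· ∈ deletionSet) n ≤ #(range 5 ∪
        ((range (L + 1)).image (3 ^ · + 1) ∪ (range (L + 1)).image (3 ^ · + 2))) := by
        rw [Nat.count_eq_card_filter_range]; exact card_le_card hsub
    _ ≤ 5 + ((L + 1) + (L + 1)) := by
        refine (card_union_le _ _).trans (add_le_add (card_range 5).le ?_)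
        refine (card_union_le _ _).trans (add_le_add ?_ ?_) <;>
          exact card_image_le.trans (card_range _).le
    _ = 2 * L + 7 := by ring

lemma tendsto_count_deletionSet_div :
    Tendsto (fun n : ℕ => (Nat.count (· ∈ deletionSet) n : ℝ) / n) atTop (𝓝 0) := by
  have hbound : Tendsto (fun n : ℕ => 2 * ((Nat.log 3 n : ℝ) / n) + 7 * (1 / (n : ℝ)))
      atTop (𝓝 0) := by
    simpa using ((tendsto_natLog_div_atTop 3).const_mul 2).add
      (tendsto_one_div_atTop_nhds_zero_nat.const_mul 7)
  refine tendsto_of_tendsto_of_tendsto_of_le_of_le tendsto_const_nhds hbound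
    (fun n => by positivity) fun n => ?_
  calc (Nat.count (· ∈ deletionSet) n : ℝ) / n ≤ ((2 * Nat.log 3 n + 7 : ℕ) : ℝ) / n := by
        gcongr
        exact count_deletionSet_le n
    _ = 2 * ((Nat.log 3 n : ℝ) / n) + 7 * (1 / (n : ℝ)) := by push_cast; ring

lemma tendsto_div_of_add_count_deletionSet {e : ℕ → ℕ}
    (he : ∀ n, e n + Nat.count (· ∈ deletionSet) n = n - 1) :
    Tendsto (fun n => (e n : ℝ) / n) atTop (𝓝 1) := by
  have hlim : Tendsto (fun n : ℕ => 1 - 1 / (n : ℝ) - Nat.count (· ∈ deletionSet) n / n)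
      atTop (𝓝 1) := by
    simpa using (tendsto_const_nhds.sub tendsto_one_div_atTop_nhds_zero_nat).sub
      tendsto_count_deletionSet_div
  refine hlim.congr' ((eventually_ge_atTop 1).mono fun n hn => ?_)
  have hen : (e n : ℝ) = n - 1 - Nat.count (· ∈ deletionSet) n := by
    have hn_eq := he n
    rw [eq_sub_iff_add_eq, eq_sub_iff_add_eq]
    exact_mod_cast (by omega : e n + Nat.count (· ∈ deletionSet) n + 1 = n)
  have hn' : (n : ℝ) ≠ 0 := by positivity
  simp only [hen]
  field_simp

lemma inv_three_pow_count_deletionSet_le_telescoping (n : ℕ) :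
    (3 : ℝ)⁻¹ ^ (Nat.count (· ∈ deletionSet) (n + 9 + 1) + 1) ≤
      3 * (1 / (n + 9) - 1 / (n + 1 + 9)) := by
  set c := Nat.count (· ∈ deletionSet) (n + 9 + 1)
  have hsq : ((n + 10 : ℕ) : ℝ) ^ 2 ≤ 3 ^ (c + 2) := by
    exact_mod_cast sq_le_three_pow_count_deletionSet (n := n + 10) (by omega)
  push_cast at hsq
  calc (3 : ℝ)⁻¹ ^ (c + 1) = 3 / 3 ^ (c + 2) := by rw [inv_pow]; field_simp; ring
    _ ≤ 3 / (n + 10) ^ 2 := by gcongr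
    _ ≤ 3 * (1 / (n + 9) - 1 / (n + 1 + 9)) := by
        rw [div_sub_div _ _ (by positivity) (by positivity)]
        rw [div_le_iff₀ (by positivity)]
        field_simp
        nlinarith

lemma summable_inv_three_pow_count_deletionSet_and_tsum_lt_one :
    Summable (fun n => (3 : ℝ)⁻¹ ^ (Nat.count (· ∈ deletionSet) (n + 1) + 1)) ∧
      ∑' n, (3 : ℝ)⁻¹ ^ (Nat.count (· ∈ deletionSet) (n + 1) + 1) < 1 := by
  set g := fun n => (3 : ℝ)⁻¹ ^ (Nat.count (· ∈ deletionSet) (n + 1) + 1)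
  obtain ⟨htail_summable, htail⟩ :=
    summable_and_tsum_le_of_le_telescoping (g := fun n => g (n + 9)) (fun n => by positivity)
      (by norm_num) inv_three_pow_count_deletionSet_le_telescoping
  have hsum : Summable g := (summable_nat_add_iff 9).1 htail_summable
  have hhead : ∑ n ∈ range 9, g n ≤ 125 / 243 := by
    calc ∑ n ∈ range 9, g n ≤ ∑ n ∈ range 9, (3 : ℝ)⁻¹ ^ (min n 4 + 1) :=
          sum_le_sum fun n _ => pow_le_pow_of_le_one (by norm_num) (by norm_num)
            (by simpa using min_four_le_count_deletionSet n)
      _ = 125 / 243 := by norm_num [sum_range_succ]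
  refine ⟨hsum, ?_⟩
  rw [← hsum.sum_add_tsum_nat_add 9]
  push_cast at htail
  linarith

end count

theorem stmt15 (B : Set ℕ)
    (hB : B = {1, 2, 3, 4} ∪ {m | ∃ k, 2 ≤ k ∧ (m = 3 ^ k + 1 ∨ m = 3 ^ k + 2)})
    (a : ℕ → ℕ)
    (ha1 : ∀ n, n ∈ B → a n = 1) (ha3 : ∀ n, n ∉ B → a n = 3)
    (f : ℕ → ℕ)
    (hf : ∀ n, 1 ≤ n → f n = ∏ i ∈ Finset.Icc 1 (n - 1), a i) :
    Filter.Tendsto (fun n : ℕ => (f n : ℝ) ^ ((1 : ℝ) / (n : ℝ))) Filter.atTop (nhds 3) ∧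
    Summable (fun n : ℕ => (f (n + 1) : ℝ) / 3 ^ (n + 1)) ∧
    ∑' n : ℕ, (f (n + 1) : ℝ) / 3 ^ (n + 1) < 1 := by
  classical
  obtain rfl : B = deletionSet := hB
  have hfe : ∀ n, 1 ≤ n → (f n : ℝ) = 3 ^ #{i ∈ Icc 1 (n - 1) | i ∉ deletionSet} :=
    fun n hn => by rw [hf n hn, prod_eq_pow_card_filter_notMem ha1 ha3]; push_cast; rfl
  have he := card_filter_notMem_Icc_add_count zero_notMem_deletionSet
  have hterm : (fun n : ℕ => (f (n + 1) : ℝ) / 3 ^ (n + 1)) =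
      fun n => (3 : ℝ)⁻¹ ^ (Nat.count (· ∈ deletionSet) (n + 1) + 1) := funext fun n => by
    rw [hfe (n + 1) (Nat.le_add_left 1 n)]
    exact pow_div_pow_succ_of_add_eq three_ne_zero (he (n + 1))
  refine ⟨?_, hterm ▸ summable_inv_three_pow_count_deletionSet_and_tsum_lt_one⟩
  refine (tendsto_pow_rpow_one_div three_pos (tendsto_div_of_add_count_deletionSet he)).congr'
    ((eventually_ge_atTop 1).mono fun n hn => ?_)
  dsimp only
  rw [hfe n hn]
end

section
/- Let λ > 4, and let w_k be as in the explicit formula with roots α_± of α² − α + 1/λ. Set v_k = w_{k-1} − w_k for k ≥ 1. Then v = (v_k) is a positive summable sequence satisfying, for every k ≥ 2, ∑_{j ≥ k-1}^{∞} v_j = λ v_k. -/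
theorem stmt18 (lam : ℝ) (hlam : 4 < lam)
    (s αp αm cp cm : ℝ)
    (hs : s = Real.sqrt (1 - 4 / lam))
    (hαp : αp = (1 + s) / 2) (hαm : αm = (1 - s) / 2)
    (hcp : cp = (1 - 2 / lam) / (2 * s))
    (hcm : cm = (2 * s - 1 + 2 / lam) / (2 * s))
    (w : ℕ → ℝ) (hw : ∀ k, w k = cp * αp ^ k + cm * αm ^ k)
    (v : ℕ → ℝ) (hv : ∀ k, v k = w (k - 1) - w k) :
    (∀ k, 1 ≤ k → 0 < v k) ∧ Summable v ∧
    (∀ k, 2 ≤ k → ∑' j : ℕ, (if k - 1 ≤ j then v j else 0) = lam * v k) := by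
  have hlam0 : (0:ℝ) < lam := by linarith
  have h4 : (0:ℝ) < 1 - 4 / lam := by
    have : 4 / lam < 1 := by rw [div_lt_one hlam0]; linarith
    linarith
  have hs0 : 0 < s := by rw [hs]; exact Real.sqrt_pos.mpr h4
  have hs2 : s ^ 2 = 1 - 4 / lam := by rw [hs, Real.sq_sqrt h4.le]
  have hs1 : s < 1 := by nlinarith [div_pos (by norm_num : (0:ℝ) < 4) hlam0]
  have hαp0 : 0 < αp := by rw [hαp]; linarith
  have hαp1 : αp < 1 := by rw [hαp]; linarith
  have hαm0 : 0 < αm := by rw [hαm]; linarith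
  have hαm1 : αm < 1 := by rw [hαm]; linarith
  have hαmp : αm ≤ αp := by rw [hαp, hαm]; linarith
  have hcp0 : 0 < cp := by
    rw [hcp]
    apply div_pos _ (by linarith)
    have : 2 / lam < 1 / 2 := by
      rw [div_lt_div_iff₀ hlam0 (by norm_num)]; linarith
    linarith
  have hprod : αp * αm = 1 / lam := by
    rw [hαp, hαm]
    linear_combination (-(1:ℝ)/4) * hs2
  have hinv : lam * (αp * αm) = 1 := by
    rw [hprod]; field_simp
  -- key formula
  have hvk : ∀ n : ℕ, v (n + 1) = cp * αm * αp ^ n + cm * αp * αm ^ n := by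
    intro n
    rw [hv]
    simp only [Nat.add_sub_cancel]
    rw [hw, hw, pow_succ, pow_succ, hαp, hαm]
    ring
  have hv1 : (0:ℝ) < cp * αm + cm * αp := by
    have : cp * αm + cm * αp = (s + 2 / lam) / 2 := by
      rw [hcp, hcm, hαp, hαm]
      field_simp
      ring
    rw [this]
    have : 0 < 2 / lam := by positivity
    linarith
  -- positivity
  have hpos : ∀ k, 1 ≤ k → 0 < v k := by
    intro k hk
    obtain ⟨n, rfl⟩ : ∃ n, k = n + 1 := ⟨k - 1, by omega⟩
    rw [hvk]
    have hA : 0 < αp ^ n := pow_pos hαp0 n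
    have hB : 0 < αm ^ n := pow_pos hαm0 n
    have hBA : αm ^ n ≤ αp ^ n := pow_le_pow_left₀ hαm0.le hαmp n
    have h1 : 0 < cp * αm := mul_pos hcp0 hαm0
    nlinarith [mul_pos hv1 hB, mul_nonneg h1.le (sub_nonneg.mpr hBA)]
  -- summability
  have hsp : Summable (fun n : ℕ => αp ^ n) := summable_geometric_of_lt_one hαp0.le hαp1
  have hsm : Summable (fun n : ℕ => αm ^ n) := summable_geometric_of_lt_one hαm0.le hαm1
  have hws : Summable w :=
    ((hsp.mul_left cp).add (hsm.mul_left cm)).congr (fun n => (hw n).symm)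
  have hw1 : Summable (fun k : ℕ => w (k - 1)) := by
    rw [← summable_nat_add_iff 1]
    exact hws.congr (fun n => by simp)
  have hvs : Summable v := (hw1.sub hws).congr (fun n => (hv n).symm)
  refine ⟨hpos, hvs, ?_⟩
  intro k hk
  obtain ⟨n, rfl⟩ : ∃ n, k = n + 2 := ⟨k - 2, by omega⟩
  have hkm : n + 2 - 1 = n + 1 := by omega
  rw [hkm]
  have hf : Summable (fun j : ℕ => if n + 1 ≤ j then v j else 0) :=
    (hvs.indicator {j | n + 1 ≤ j}).congr
      (fun j => by simp [Set.indicator_apply, Set.mem_setOf_eq])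
  have hsplit := Summable.sum_add_tsum_nat_add (f := fun j : ℕ => if n + 1 ≤ j then v j else 0)
    (n + 1) hf
  have hzero : ∑ i ∈ Finset.range (n + 1), (if n + 1 ≤ i then v i else 0) = 0 := by
    apply Finset.sum_eq_zero
    intro i hi
    rw [Finset.mem_range] at hi
    exact if_neg (by omega)
  have hshift : (fun i : ℕ => if n + 1 ≤ i + (n + 1) then v (i + (n + 1)) else 0)
      = fun i : ℕ => (cp * αm * αp ^ n) * αp ^ i + (cm * αp * αm ^ n) * αm ^ i := by
    funext i
    rw [if_pos (by omega)]
    have : i + (n + 1) = (i + n) + 1 := by omega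
    rw [this, hvk, pow_add, pow_add]
    ring
  have hsum1 : Summable (fun i : ℕ => (cp * αm * αp ^ n) * αp ^ i) := hsp.mul_left _
  have hsum2 : Summable (fun i : ℕ => (cm * αp * αm ^ n) * αm ^ i) := hsm.mul_left _
  have htail : ∑' i : ℕ, (if n + 1 ≤ i + (n + 1) then v (i + (n + 1)) else 0)
      = cp * αp ^ n + cm * αm ^ n := by
    rw [hshift, Summable.tsum_add hsum1 hsum2, tsum_mul_left, tsum_mul_left,
      tsum_geometric_of_lt_one hαp0.le hαp1, tsum_geometric_of_lt_one hαm0.le hαm1]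
    have h1p : 1 - αp = αm := by rw [hαp, hαm]; ring
    have h1m : 1 - αm = αp := by rw [hαp, hαm]; ring
    rw [h1p, h1m]
    field_simp
  rw [← hsplit, hzero, zero_add, htail, hvk, pow_succ, pow_succ]
  linear_combination (-(cp * αp ^ n + cm * αm ^ n)) * hinv
end
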